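/- arXiv:2205.01391 — 8 statements merged into one kernel-verified Lean document; each statement's English description precedes it below -/
import Mathlib

section
/- Let n ≥ 0 be an integer and let F be a finite set generating at level n. Then 3^(#F) ≥ 2n + 1; equivalently, #F ≥ ⌈log(2n+1)/log 3⌉, where ⌈·⌉ is the ceiling function and log is the natural logarithm. -/
/-- A finite set `F ⊆ ℤ ∩ [-n, n]` *generates at level* `n` if every integer `x`
with `|x| ≤ n` can be written as `x = ∑_{j∈F} α(j)·j` for coefficients
`α(j) ∈ {-1,0,1}` whose total mass `∑ |α(j)·j|` is at most `n`. -/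
def GeneratesAtLevel (n : ℤ) (F : Finset ℤ) : Prop :=
  (∀ j ∈ F, -n ≤ j ∧ j ≤ n) ∧
  ∀ x : ℤ, |x| ≤ n →
    ∃ α : ℤ → ℤ, (∀ j ∈ F, α j = -1 ∨ α j = 0 ∨ α j = 1) ∧
      x = ∑ j ∈ F, α j * j ∧ (∑ j ∈ F, |α j * j|) ≤ n

/-! Every integer in `[-n, n]` is the image of a coefficient vector in `{-1, 0, 1}^F` under
`c ↦ ∑ c j * j`, so `2n + 1 ≤ 3^#F`; the logarithmic bound is this inequality after taking logs. -/

theorem Finset.card_le_card_pow_of_forall_eq_sum_smul {ι R M : Type*} [AddCommMonoid M]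
    [SMul R M] (F : Finset ι) (v : ι → M) (C : Finset R) (s : Finset M)
    (h : ∀ x ∈ s, ∃ c : ι → R, (∀ j ∈ F, c j ∈ C) ∧ x = ∑ j ∈ F, c j • v j) :
    s.card ≤ C.card ^ F.card := by
  classical
  calc s.card ≤ ((F.pi fun _ => C).image fun c => ∑ j ∈ F.attach, c j j.2 • v j).card := by
        refine Finset.card_le_card fun x hx => ?_
        obtain ⟨c, hcC, rfl⟩ := h x hx
        refine Finset.mem_image.mpr ⟨fun j _ => c j, Finset.mem_pi.mpr hcC, ?_⟩
        exact Finset.sum_attach F fun j => c j • v j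
    _ ≤ (F.pi fun _ => C).card := Finset.card_image_le
    _ = C.card ^ F.card := by rw [Finset.card_pi, Finset.prod_const]

theorem GeneratesAtLevel.two_mul_add_one_le_three_pow {n : ℤ} {F : Finset ℤ}
    (hF : GeneratesAtLevel n F) : 2 * n + 1 ≤ 3 ^ F.card := by
  have hcard : (Finset.Icc (-n) n).card ≤ (Finset.Icc (-1 : ℤ) 1).card ^ F.card := by
    refine Finset.card_le_card_pow_of_forall_eq_sum_smul F id _ _ fun x hx => ?_
    obtain ⟨α, hα, hx, -⟩ := hF.2 x (abs_le.mpr (Finset.mem_Icc.mp hx))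
    refine ⟨α, fun j hj => ?_, hx⟩
    rcases hα j hj with h | h | h <;> simp [h]
  rw [Int.card_Icc, Int.card_Icc, show n + 1 - -n = 2 * n + 1 by ring] at hcard
  calc 2 * n + 1 ≤ ((2 * n + 1).toNat : ℤ) := Int.self_le_toNat _
    _ ≤ 3 ^ F.card := by exact_mod_cast hcard

theorem Int.ceil_log_div_log_le_of_le_pow {b y : ℝ} (hb : 1 < b) (hy : 0 < y) {k : ℕ}
    (h : y ≤ b ^ k) : ⌈Real.log y / Real.log b⌉ ≤ k := by
  rw [Int.ceil_le, div_le_iff₀ (Real.log_pos hb), Int.cast_natCast, ← Real.log_pow]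
  exact Real.log_le_log hy h

/-- if `F` generates at level `n ≥ 0` then `3^#F ≥ 2n+1`,
equivalently `#F ≥ ⌈log(2n+1)/log 3⌉`. -/
theorem stmt3 (n : ℤ) (hn : 0 ≤ n) (F : Finset ℤ) (hF : GeneratesAtLevel n F) :
    2 * n + 1 ≤ 3 ^ F.card ∧
    ⌈Real.log (2 * (n : ℝ) + 1) / Real.log 3⌉ ≤ (F.card : ℤ) := by
  have key := hF.two_mul_add_one_le_three_pow
  have hpos : (0 : ℝ) < 2 * n + 1 := by
    have : (0 : ℝ) ≤ n := by exact_mod_cast hn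
    linarith
  exact ⟨key, Int.ceil_log_div_log_le_of_le_pow (by norm_num) hpos (by exact_mod_cast key)⟩
end

section
/- For every integer n ≥ 0, the minimal cardinality of a finite set generating at level n equals ⌈log(2n+1)/log 3⌉, where ⌈·⌉ is the ceiling function and log is the natural logarithm. That is: there exists a set F generating at level n with #F = ⌈log(2n+1)/log 3⌉, and every set generating at level n has cardinality at least ⌈log(2n+1)/log 3⌉. -/
open Finset Function

def signedSums (F : Finset ℤ) : Finset ℤ :=
  (Fintype.piFinset fun _ : F ↦ ({-1, 0, 1} : Finset ℤ)).image fun a : F → ℤ ↦ ∑ j, a j * j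

lemma card_signedSums_le (F : Finset ℤ) : #(signedSums F) ≤ 3 ^ #F :=
  card_image_le.trans_eq (by simp)

lemma sum_mem_signedSums {F : Finset ℤ} {α : ℤ → ℤ}
    (hα : ∀ j ∈ F, α j = -1 ∨ α j = 0 ∨ α j = 1) : ∑ j ∈ F, α j * j ∈ signedSums F :=
  mem_image.2 ⟨fun j ↦ α j, Fintype.mem_piFinset.2 fun j ↦ by simpa using hα j j.2,
    sum_coe_sort F (fun j ↦ α j * j)⟩

namespace GeneratesAtLevel

variable {n : ℤ} {F : Finset ℤ}

lemma Icc_subset_signedSums (hF : GeneratesAtLevel n F) : Icc (-n) n ⊆ signedSums F := by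
  intro x hx
  obtain ⟨α, hα, rfl, -⟩ := hF.2 x (abs_le.2 (mem_Icc.1 hx))
  exact sum_mem_signedSums hα

lemma two_mul_add_one_le_three_pow_card (hF : GeneratesAtLevel n F) :
    2 * n + 1 ≤ 3 ^ #F := by
  have h := (card_le_card hF.Icc_subset_signedSums).trans (card_signedSums_le F)
  rw [Int.card_Icc] at h
  have h3 : ((3 ^ #F : ℕ) : ℤ) = 3 ^ #F := by norm_num
  omega

lemma insert_sub {m : ℤ} (hF : GeneratesAtLevel m F) (hmn : m ≤ n)
    (hn : n ≤ 3 * m + 1) (he : m - n ∉ F) : GeneratesAtLevel n (insert (m - n) F) := by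
  refine ⟨?_, fun x hx ↦ ?_⟩
  · simp only [mem_insert, forall_eq_or_imp]
    exact ⟨by omega, fun j hj ↦ by have := hF.1 j hj; omega⟩
  obtain ⟨c, hc, hshift⟩ : ∃ c : ℤ, (c = -1 ∨ c = 0 ∨ c = 1) ∧ |x - c * (m - n)| ≤ m := by
    rw [abs_le] at hx
    by_cases hxm : m < x
    · exact ⟨-1, by norm_num, abs_le.2 ⟨by linarith, by linarith⟩⟩
    by_cases hxm' : x < -m
    · exact ⟨1, by norm_num, abs_le.2 ⟨by linarith, by linarith⟩⟩
    · exact ⟨0, by norm_num, abs_le.2 ⟨by linarith, by linarith⟩⟩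
  have hcost : |c * (m - n)| ≤ n - m := by
    rcases hc with rfl | rfl | rfl <;> simp only [abs_le] <;> omega
  obtain ⟨α, hα, hsum, hmass⟩ := hF.2 _ hshift
  have hupdate : ∀ j ∈ F, update α (m - n) c j = α j := fun j hj ↦
    update_of_ne (ne_of_mem_of_not_mem hj he) _ _
  refine ⟨update α (m - n) c, ?_, ?_, ?_⟩
  · simpa [forall_eq_or_imp, hc] using fun j hj ↦ hupdate j hj ▸ hα j hj
  · rw [sum_insert he, update_self, sum_congr rfl fun j hj ↦ by rw [hupdate j hj], ← hsum]
    ring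
  · rw [sum_insert he, update_self, sum_congr rfl fun j hj ↦ by rw [hupdate j hj]]
    linarith

end GeneratesAtLevel

lemma exists_balancedTernary_digits (k : ℕ) (y : ℤ) (hy : |y| ≤ ∑ i ∈ range k, (3 : ℤ) ^ i) :
    ∃ a : ℕ → ℤ, (∀ i, a i = -1 ∨ a i = 0 ∨ a i = 1) ∧ y = ∑ i ∈ range k, a i * 3 ^ i := by
  induction k generalizing y with
  | zero => exact ⟨0, by simp, by simpa using hy⟩
  | succ k ih =>
    have hS : ∑ i ∈ range (k + 1), (3 : ℤ) ^ i = 3 * ∑ i ∈ range k, (3 : ℤ) ^ i + 1 := by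
      rw [sum_range_succ', mul_sum]
      simp [pow_succ, mul_comm]
    -- `q` is the integer nearest to `y / 3`, so the last digit `y - 3q` lies in `{-1, 0, 1}`.
    set q := (y + 1) / 3 with hq_def
    have hd : y - 3 * q = -1 ∨ y - 3 * q = 0 ∨ y - 3 * q = 1 := by omega
    obtain ⟨a, ha, hq⟩ := ih q (by rw [hS, abs_le] at hy; rw [abs_le]; omega)
    refine ⟨fun | 0 => y - 3 * q | i + 1 => a i, fun | 0 => hd | i + 1 => ha i, ?_⟩
    rw [sum_range_succ']
    simp only [pow_succ, ← mul_assoc, ← sum_mul, ← hq]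
    ring

lemma three_pow_injective : Injective ((3 : ℤ) ^ · : ℕ → ℤ) :=
  pow_right_injective₀ (by norm_num) (by norm_num)

def powersOfThree (k : ℕ) : Finset ℤ :=
  (range k).map ⟨((3 : ℤ) ^ ·), three_pow_injective⟩

lemma card_powersOfThree (k : ℕ) : #(powersOfThree k) = k := by
  simp [powersOfThree]

lemma mem_powersOfThree {k : ℕ} {j : ℤ} : j ∈ powersOfThree k ↔ ∃ i < k, 3 ^ i = j := by
  simp [powersOfThree]

lemma pos_of_mem_powersOfThree {k : ℕ} {j : ℤ} (hj : j ∈ powersOfThree k) : 0 < j := by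
  obtain ⟨i, -, rfl⟩ := mem_powersOfThree.1 hj
  positivity

lemma generatesAtLevel_powersOfThree (k : ℕ) :
    GeneratesAtLevel (∑ i ∈ range k, 3 ^ i) (powersOfThree k) := by
  refine ⟨fun j hj ↦ ?_, fun y hy ↦ ?_⟩
  · have hpos := pos_of_mem_powersOfThree hj
    obtain ⟨i, hi, rfl⟩ := mem_powersOfThree.1 hj
    have hle : (3 : ℤ) ^ i ≤ ∑ i ∈ range k, 3 ^ i :=
      single_le_sum (f := ((3 : ℤ) ^ ·)) (fun i _ ↦ by positivity) (mem_range.2 hi)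
    exact ⟨by linarith, hle⟩
  obtain ⟨a, ha, rfl⟩ := exists_balancedTernary_digits k y hy
  have hinv : ∀ i, a (invFun ((3 : ℤ) ^ ·) (3 ^ i)) = a i := fun i ↦ by
    rw [leftInverse_invFun three_pow_injective i]
  refine ⟨a ∘ invFun ((3 : ℤ) ^ ·), ?_, ?_, ?_⟩
  · intro j hj
    obtain ⟨i, -, rfl⟩ := mem_powersOfThree.1 hj
    simpa [hinv] using ha i
  · simp [powersOfThree, hinv]
  · simp only [powersOfThree, sum_map, Embedding.coeFn_mk, comp_apply, hinv]
    refine sum_le_sum fun i _ ↦ ?_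
    rcases ha i with h | h | h <;> simp [h]

lemma exists_generatesAtLevel_card_eq_clog (n : ℕ) :
    ∃ F, GeneratesAtLevel n F ∧ #F = Nat.clog 3 (2 * n + 1) := by
  have hup : 2 * n + 1 ≤ 3 ^ Nat.clog 3 (2 * n + 1) := Nat.le_pow_clog (by norm_num) _
  rcases hk : Nat.clog 3 (2 * n + 1) with _ | k
  · obtain rfl : n = 0 := by rw [hk] at hup; omega
    exact ⟨powersOfThree 0, by simpa using generatesAtLevel_powersOfThree 0, card_powersOfThree 0⟩
  have hlow : 3 ^ k < 2 * n + 1 := (Nat.lt_clog_iff_pow_lt (by norm_num)).1 (by omega)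
  rw [hk, pow_succ'] at hup
  set M := ∑ i ∈ range k, (3 : ℤ) ^ i
  have hM : 2 * M + 1 = 3 ^ k := by linarith [geom_sum_mul (3 : ℤ) k]
  have hlow' : (3 : ℤ) ^ k < 2 * n + 1 := by exact_mod_cast hlow
  have hup' : (2 * n + 1 : ℤ) ≤ 3 * 3 ^ k := by exact_mod_cast hup
  -- The new element is `M - n` rather than `n - M` because, being negative, it is no power of `3`.
  have hnotMem : M - n ∉ powersOfThree k := fun h ↦ by
    have := pos_of_mem_powersOfThree h
    omega
  exact ⟨_, (generatesAtLevel_powersOfThree k).insert_sub (by omega) (by omega) hnotMem,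
    by rw [card_insert_of_notMem hnotMem, card_powersOfThree]⟩

lemma ceil_log_div_log_natCast (b m : ℕ) : ⌈Real.log m / Real.log b⌉ = Nat.clog b m := by
  rw [Real.log_div_log, Real.ceil_logb_natCast (Nat.cast_nonneg m), Int.clog_natCast]

/-- for `n ≥ 0` the minimal cardinality of a set generating at
level `n` equals `⌈log(2n+1)/log 3⌉`: such a generating set exists, and every
generating set has at least this cardinality. -/
theorem stmt4 (n : ℤ) (hn : 0 ≤ n) :
    (∃ F : Finset ℤ, GeneratesAtLevel n F ∧
      (F.card : ℤ) = ⌈Real.log (2 * (n : ℝ) + 1) / Real.log 3⌉) ∧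
    ∀ F : Finset ℤ, GeneratesAtLevel n F →
      ⌈Real.log (2 * (n : ℝ) + 1) / Real.log 3⌉ ≤ (F.card : ℤ) := by
  lift n to ℕ using hn
  have hceil : ⌈Real.log (2 * ((n : ℤ) : ℝ) + 1) / Real.log 3⌉ = Nat.clog 3 (2 * n + 1) := by
    exact_mod_cast ceil_log_div_log_natCast 3 (2 * n + 1)
  rw [hceil]
  refine ⟨?_, fun F hF ↦ ?_⟩
  · obtain ⟨F, hF, hcard⟩ := exists_generatesAtLevel_card_eq_clog n
    exact ⟨F, hF, by rw [hcard]⟩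
  · have h := hF.two_mul_add_one_le_three_pow_card
    exact_mod_cast Nat.clog_le_of_le_pow (by exact_mod_cast h)
end

section
/- Let n ≥ 0 be an integer with n ∉ {2, 5}. Then there exists a finite subset F ⊆ {1, 2, …, n} of cardinality #F = ⌈log(2n+1)/log 3⌉ such that Σ_{j∈F} j = n and such that every integer x with |x| ≤ n can be written as x = Σ_{j∈F} α(j)·j for some function α : F → {-1,0,1} (in particular, since Σ_{j∈F} j = n, the mass condition Σ_{j∈F} |α(j)·j| ≤ n holds automatically, so F generates at level n). -/
namespace Stmt5Aux

/-- `padd s t l` prepends the powers `3^(s+t-1), …, 3^s` (descending) to `l`. -/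
def padd (s : ℕ) : ℕ → List ℤ → List ℤ
  | 0, l => l
  | t+1, l => 3^(s+t) :: padd s t l

/-- "good" lists: each element is at most `2 * (sum of later elements) + 1`. -/
def good : List ℤ → Prop
  | [] => True
  | a :: l => a ≤ 2 * l.sum + 1 ∧ good l

lemma padd_sum (s t : ℕ) (l : List ℤ) :
    (padd s t l).sum * 2 = 3^(s+t) - 3^s + l.sum * 2 := by
  induction t with
  | zero => simp [padd]
  | succ t ih =>
      simp only [padd, List.sum_cons]
      rw [show s + (t+1) = (s+t) + 1 from rfl, pow_succ]
      linarith

lemma padd_mem {a : ℤ} {s t : ℕ} {l : List ℤ} :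
    a ∈ padd s t l ↔ (∃ j, s ≤ j ∧ j < s + t ∧ a = 3^j) ∨ a ∈ l := by
  induction t with
  | zero => simp [padd]; intro j h1 h2; omega
  | succ t ih =>
      simp only [padd, List.mem_cons, ih]
      constructor
      · rintro (rfl | ⟨j, h1, h2, rfl⟩ | h)
        · exact Or.inl ⟨s + t, by omega, by omega, rfl⟩
        · exact Or.inl ⟨j, h1, by omega, rfl⟩
        · exact Or.inr h
      · rintro (⟨j, h1, h2, rfl⟩ | h)
        · rcases eq_or_lt_of_le (show j ≤ s + t by omega) with rfl | hlt
          · exact Or.inl rfl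
          · exact Or.inr (Or.inl ⟨j, h1, by omega, rfl⟩)
        · exact Or.inr (Or.inr h)

lemma padd_good {s t : ℕ} {l : List ℤ} (h3 : (3:ℤ)^s ≤ 2 * l.sum + 1)
    (hg : good l) : good (padd s t l) := by
  induction t with
  | zero => exact hg
  | succ t ih =>
      refine ⟨?_, ih⟩
      have := padd_sum s t l
      have h1 : (3:ℤ)^(s+t) ≥ 3^s := pow_le_pow_right₀ (by norm_num) (by omega)
      linarith

lemma padd_pairwise {s t : ℕ} {l : List ℤ} (hl : l.Pairwise (· > ·))
    (hb : ∀ a ∈ l, a < 3^s) : (padd s t l).Pairwise (· > ·) := by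
  induction t with
  | zero => exact hl
  | succ t ih =>
      refine List.pairwise_cons.2 ⟨?_, ih⟩
      intro a ha
      rcases padd_mem.1 ha with ⟨j, h1, h2, rfl⟩ | h
      · exact pow_lt_pow_right₀ (by norm_num) (by omega)
      · exact lt_of_lt_of_le (hb a h) (pow_le_pow_right₀ (by norm_num) (by omega))

lemma padd_length (s t : ℕ) (l : List ℤ) : (padd s t l).length = t + l.length := by
  induction t with
  | zero => simp [padd]
  | succ t ih => simp [padd, ih]; omega

/-- Covering lemma: a good list represents every `x` with `|x| ≤ sum`. -/
lemma cov (L : List ℤ) (hnd : L.Nodup) (hg : good L) :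
    ∀ x : ℤ, |x| ≤ L.sum → ∃ α : ℤ → ℤ,
      (∀ j ∈ L.toFinset, α j = -1 ∨ α j = 0 ∨ α j = 1) ∧
      x = ∑ j ∈ L.toFinset, α j * j := by
  induction L with
  | nil =>
      intro x hx
      have : x = 0 := by simpa using abs_nonpos_iff.1 (by simpa using hx)
      exact ⟨fun _ => 0, by simp, by simp [this]⟩
  | cons a l ih =>
      intro x hx
      rw [List.nodup_cons] at hnd
      obtain ⟨hal, hndl⟩ := hnd
      obtain ⟨ha, hgl⟩ := hg
      have haF : a ∉ l.toFinset := by simpa using hal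
      have hsum : (a :: l).sum = a + l.sum := List.sum_cons
      rw [hsum] at hx
      have hx1 : x ≤ a + l.sum := (abs_le.1 hx).2
      have hx2 : -(a + l.sum) ≤ x := (abs_le.1 hx).1
      -- choose the coefficient of `a`
      have key : ∃ c : ℤ, (c = -1 ∨ c = 0 ∨ c = 1) ∧ |x - c * a| ≤ l.sum := by
        rcases le_or_gt x l.sum with h1 | h1
        · rcases le_or_gt (-l.sum) x with h2 | h2
          · exact ⟨0, Or.inr (Or.inl rfl), by rw [abs_le]; constructor <;> linarith⟩
          · exact ⟨-1, Or.inl rfl, by rw [abs_le]; constructor <;> linarith⟩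
        · exact ⟨1, Or.inr (Or.inr rfl), by rw [abs_le]; constructor <;> linarith⟩
      obtain ⟨c, hc, hxc⟩ := key
      obtain ⟨α, hα, hrep⟩ := ih hndl hgl (x - c * a) hxc
      refine ⟨Function.update α a c, ?_, ?_⟩
      · intro j hj
        rw [List.toFinset_cons, Finset.mem_insert] at hj
        rcases hj with rfl | hj
        · simpa using hc
        · rw [Function.update_of_ne (by rintro rfl; exact haF hj)]
          exact hα j hj
      · rw [List.toFinset_cons, Finset.sum_insert haF, Function.update_self]
        have : ∑ j ∈ l.toFinset, Function.update α a c j * j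
            = ∑ j ∈ l.toFinset, α j * j := by
          apply Finset.sum_congr rfl
          intro j hj
          rw [Function.update_of_ne (by rintro rfl; exact haF hj)]
        rw [this, ← hrep]; ring

lemma ceil_eq (n : ℤ) (k : ℕ) (h0 : 0 ≤ n) (hlo : (3:ℤ)^k < 3 * (2*n+1))
    (hhi : 2*n+1 ≤ 3^k) :
    ⌈Real.log (2*(n:ℝ)+1) / Real.log 3⌉ = (k : ℤ) := by
  have hpos : (0:ℝ) < 2*(n:ℝ)+1 := by
    have : (0:ℝ) ≤ (n:ℝ) := by exact_mod_cast h0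
    linarith
  have hlog3 : 0 < Real.log 3 := Real.log_pos (by norm_num)
  rw [Int.ceil_eq_iff]
  constructor
  · rw [lt_div_iff₀ hlog3]
    have : Real.log (3^k) < Real.log (3 * (2*(n:ℝ)+1)) := by
      rw [Real.log_lt_log_iff (by positivity) (by positivity)]
      exact_mod_cast hlo
    rw [Real.log_pow, Real.log_mul (by norm_num) (by positivity)] at this
    push_cast
    nlinarith [this]
  · rw [div_le_iff₀ hlog3]
    have : Real.log (2*(n:ℝ)+1) ≤ Real.log (3^k) := by
      rw [Real.log_le_log_iff hpos (by positivity)]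
      exact_mod_cast hhi
    rw [Real.log_pow] at this
    simpa using this


lemma one_le_pow3 (j : ℕ) : (1:ℤ) ≤ 3^j := one_le_pow₀ (by norm_num)

lemma assemble (n : ℤ) (k : ℕ) (L : List ℤ)
    (hnd : L.Nodup) (hg : good L) (hsum : L.sum = n)
    (hlen : L.length = k) (hlb : ∀ a ∈ L, 1 ≤ a)
    (hceil : ⌈Real.log (2*(n:ℝ)+1) / Real.log 3⌉ = (k:ℤ)) :
    ∃ F : Finset ℤ, (∀ j ∈ F, 1 ≤ j ∧ j ≤ n) ∧
      (F.card : ℤ) = ⌈Real.log (2 * (n : ℝ) + 1) / Real.log 3⌉ ∧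
      (∑ j ∈ F, j) = n ∧
      ∀ x : ℤ, |x| ≤ n → ∃ α : ℤ → ℤ,
        (∀ j ∈ F, α j = -1 ∨ α j = 0 ∨ α j = 1) ∧ x = ∑ j ∈ F, α j * j := by
  have hsum' : ∑ x ∈ L.toFinset, x = L.sum := by simpa using List.sum_toFinset id hnd
  refine ⟨L.toFinset, ?_, ?_, ?_, ?_⟩
  · intro j hj
    have hj' : j ∈ L := List.mem_toFinset.1 hj
    refine ⟨hlb j hj', ?_⟩
    have h1 : j ≤ ∑ x ∈ L.toFinset, x :=
      Finset.single_le_sum (f := fun x => x)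
        (fun i hi => le_trans zero_le_one (hlb i (List.mem_toFinset.1 hi))) hj
    rw [hsum', hsum] at h1
    exact h1
  · rw [List.toFinset_card_of_nodup hnd, hlen, hceil]
  · rw [hsum', hsum]
  · intro x hx
    exact cov L hnd hg x (by rw [hsum]; exact hx)

end Stmt5Aux
open Stmt5Aux in
/-- for `n ≥ 0`, `n ∉ {2,5}`, there is a subset `F ⊆ {1,…,n}` of
cardinality `⌈log(2n+1)/log 3⌉` with `∑_{j∈F} j = n` such that every integer
`x` with `|x| ≤ n` is of the form `∑_{j∈F} α(j)·j` with `α(j) ∈ {-1,0,1}`. -/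
theorem stmt5 (n : ℤ) (hn : 0 ≤ n) (h2 : n ≠ 2) (h5 : n ≠ 5) :
    ∃ F : Finset ℤ, (∀ j ∈ F, 1 ≤ j ∧ j ≤ n) ∧
      (F.card : ℤ) = ⌈Real.log (2 * (n : ℝ) + 1) / Real.log 3⌉ ∧
      (∑ j ∈ F, j) = n ∧
      ∀ x : ℤ, |x| ≤ n → ∃ α : ℤ → ℤ,
        (∀ j ∈ F, α j = -1 ∨ α j = 0 ∨ α j = 1) ∧ x = ∑ j ∈ F, α j * j := by
  classical
  have hex : ∃ k : ℕ, 2*n+1 ≤ 3^k := by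
    have h1 : ∀ t : ℕ, (2*(t:ℤ)+1) ≤ 3^t := by
      intro t
      induction t with
      | zero => norm_num
      | succ t ih =>
          have h2 := one_le_pow3 t
          rw [pow_succ]
          push_cast
          push_cast at ih
          nlinarith
    refine ⟨n.toNat, ?_⟩
    have h2 := h1 n.toNat
    rwa [Int.toNat_of_nonneg hn] at h2
  obtain ⟨k, hhi, hmin⟩ : ∃ k : ℕ, (2*n+1 ≤ 3^k) ∧ ∀ j, j < k → ¬(2*n+1 ≤ 3^j) :=
    ⟨Nat.find hex, Nat.find_spec hex, fun j hj => Nat.find_min hex hj⟩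
  rcases Nat.eq_zero_or_pos k with hk0 | hkpos
  · -- k = 0, so n = 0
    rw [hk0] at hhi
    have hn0 : n = 0 := by simp at hhi; omega
    subst hn0
    refine assemble 0 0 [] List.nodup_nil trivial (by simp) (by simp) (by simp) ?_
    simp
  · obtain ⟨K, rfl⟩ : ∃ K, k = K + 1 := ⟨k - 1, by omega⟩
    have hlo : (3:ℤ)^K < 2*n+1 := by
      have := hmin K (by omega)
      omega
    have hceil : ⌈Real.log (2*(n:ℝ)+1) / Real.log 3⌉ = ((K+1 : ℕ) : ℤ) := by
      refine ceil_eq n (K+1) hn ?_ hhi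
      rw [pow_succ]
      linarith
    set S : ℤ := (padd 0 K []).sum with hSdef
    have hS2 : S * 2 = 3^K - 1 := by
      have := padd_sum 0 K []
      simpa using this
    have hSK1 : (3:ℤ)^(K+1) = 3 * 3^K := by rw [pow_succ]; ring
    rw [hSK1] at hhi
    set m : ℤ := n - S with hmdef
    have hm1 : 1 ≤ m := by simp only [hmdef]; linarith
    have hm2 : m ≤ 3^K := by simp only [hmdef]; linarith
    have hpw0 : (padd 0 K ([] : List ℤ)).Pairwise (· > ·) :=
      padd_pairwise List.Pairwise.nil (by simp)
    have hnd0 : (padd 0 K ([] : List ℤ)).Nodup := hpw0.imp fun h => ne_of_gt h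
    have hg0 : good (padd 0 K ([] : List ℤ)) :=
      padd_good (by norm_num [good]) trivial
    have hlb0 : ∀ a ∈ padd 0 K ([] : List ℤ), 1 ≤ a := by
      intro a ha
      rcases padd_mem.1 ha with ⟨j, _, _, rfl⟩ | h
      · exact one_le_pow3 j
      · simp at h
    have hlen0 : (padd 0 K ([] : List ℤ)).length = K := by simp [padd_length]
    by_cases hmem : m ∈ padd 0 K ([] : List ℤ)
    · -- m is a power of 3: exceptional cases
      obtain ⟨i, -, hiK, hmi⟩ : ∃ j, 0 ≤ j ∧ j < 0 + K ∧ m = 3^j := by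
        rcases padd_mem.1 hmem with h | h
        · exact h
        · simp at h
      rw [Nat.zero_add] at hiK
      by_cases hi0 : i = 0
      · -- m = 1
        subst hi0
        simp only [pow_zero] at hmi
        have hn_eq : n = S + 1 := by omega
        have hK3 : 3 ≤ K := by
          by_contra hK3
          interval_cases K
          · norm_num at hS2; omega
          · norm_num at hS2; omega
        -- L = (3^(K-1) - 1) :: padd 1 (K-2) [2, 1]
        set base : List ℤ := [2, 1] with hbase
        set mid : List ℤ := padd 1 (K-2) base with hmid
        have hst : 1 + (K-2) = K - 1 := by omega
        have hmidsum : mid.sum * 2 = 3^(K-1) + 3 := by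
          have := padd_sum 1 (K-2) base
          rw [hst] at this
          simp only [hmid, hbase] at *
          simp at this ⊢
          linarith
        have hmidmem : ∀ a ∈ mid, (∃ j, 1 ≤ j ∧ j ≤ K - 2 ∧ a = 3^j) ∨ a = 2 ∨ a = 1 := by
          intro a ha
          rcases padd_mem.1 ha with ⟨j, h1, h2, rfl⟩ | h
          · exact Or.inl ⟨j, h1, by omega, rfl⟩
          · simp [hbase] at h
            rcases h with rfl | rfl
            · exact Or.inr (Or.inl rfl)
            · exact Or.inr (Or.inr rfl)
        have hmidpw : mid.Pairwise (· > ·) := by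
          refine padd_pairwise ?_ ?_
          · norm_num [hbase]
          · intro a ha
            simp [hbase] at ha
            rcases ha with rfl | rfl <;> norm_num
        have hKK : (3:ℤ)^(K-1) * 3 = 3^K := by
          rw [← pow_succ]
          congr 1
          omega
        have htop : ∀ a ∈ mid, a < 3^(K-1) - 1 := by
          intro a ha
          have h3 : (3:ℤ)^(K-2) * 3 = 3^(K-1) := by
            rw [← pow_succ]; congr 1; omega
          have h32 : (1:ℤ) ≤ 3^(K-2) := one_le_pow3 _
          rcases hmidmem a ha with ⟨j, hj1, hj2, rfl⟩ | rfl | rfl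
          · have : (3:ℤ)^j ≤ 3^(K-2) := pow_le_pow_right₀ (by norm_num) (by omega)
            linarith
          · have : (3:ℤ)^(K-2) ≥ 3 := by
              calc (3:ℤ)^(K-2) ≥ 3^1 := pow_le_pow_right₀ (by norm_num) (by omega)
              _ = 3 := by norm_num
            linarith
          · linarith [one_le_pow3 (K-2)]
        refine assemble n (K+1) ((3^(K-1) - 1) :: mid) ?_ ?_ ?_ ?_ ?_ hceil
        · exact (List.pairwise_cons.2 ⟨htop, hmidpw⟩).imp fun h => ne_of_gt h
        · refine ⟨by linarith, ?_⟩
          exact padd_good (by norm_num [hbase]) (by norm_num [hbase, good])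
        · simp only [List.sum_cons]
          linarith
        · simp [hmid, padd_length, hbase]; omega
        · intro a ha
          rcases List.mem_cons.1 ha with rfl | ha
          · have h31 : (3:ℤ)^1 ≤ 3^(K-1) := pow_le_pow_right₀ (by norm_num) (by omega)
            norm_num at h31; linarith
          · rcases hmidmem a ha with ⟨j, _, _, rfl⟩ | rfl | rfl
            · exact one_le_pow3 j
            · norm_num
            · norm_num
      · -- m = 3^i, 1 ≤ i < K
        have hi1 : 1 ≤ i := by omega
        have hpw0i : (padd 0 i ([] : List ℤ)).Pairwise (· > ·) :=
          padd_pairwise List.Pairwise.nil (by simp)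
        have hg0i : good (padd 0 i ([] : List ℤ)) :=
          padd_good (by norm_num [good]) trivial
        have hlb0i : ∀ a ∈ padd 0 i ([] : List ℤ), 1 ≤ a := by
          intro a ha
          rcases padd_mem.1 ha with ⟨j, _, _, rfl⟩ | h
          · exact one_le_pow3 j
          · simp at h
        set base : List ℤ := (3^i + 1) :: (3^i - 1) :: padd 0 i [] with hbase
        have hsi2 : (padd 0 i ([] : List ℤ)).sum * 2 = 3^i - 1 := by
          have := padd_sum 0 i ([] : List ℤ)
          simpa using this
        have h3i1 : (3:ℤ) ≤ 3^i := by
          calc (3:ℤ) = 3^1 := by norm_num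
          _ ≤ 3^i := pow_le_pow_right₀ (by norm_num) hi1
        have hpady : ∀ a ∈ padd 0 i ([] : List ℤ), a * 3 ≤ 3^i := by
          intro a ha
          rcases padd_mem.1 ha with ⟨j, _, hj, rfl⟩ | h
          · have : (3:ℤ)^j * 3 = 3^(j+1) := (pow_succ 3 j).symm
            rw [this]
            exact pow_le_pow_right₀ (by norm_num) (by omega)
          · simp at h
        have hbpw : base.Pairwise (· > ·) := by
          refine List.pairwise_cons.2 ⟨?_, List.pairwise_cons.2 ⟨?_, hpw0i⟩⟩
          · intro a ha
            rcases List.mem_cons.1 ha with rfl | ha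
            · linarith
            · have h1 := hpady a ha
              have h2 := hlb0i a ha
              linarith
          · intro a ha
            have h1 := hpady a ha
            have h2 := hlb0i a ha
            linarith
        have h3i1' : (3:ℤ)^(i+1) = 3 * 3^i := by rw [pow_succ]; ring
        have hbsum : base.sum * 2 = 5 * 3^i - 1 := by
          simp only [hbase, List.sum_cons]
          linarith
        have hbgood : good base := by
          refine ⟨?_, ?_, hg0i⟩
          · simp only [List.sum_cons]; linarith
          · linarith
        have hst : (i+1) + (K-1-i) = K := by omega
        refine assemble n (K+1) (padd (i+1) (K-1-i) base) ?_ ?_ ?_ ?_ ?_ hceil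
        · refine (padd_pairwise hbpw ?_).imp fun h => ne_of_gt h
          intro a ha
          rcases List.mem_cons.1 ha with rfl | ha
          · linarith
          rcases List.mem_cons.1 ha with rfl | ha
          · linarith
          · have h1 := hpady a ha
            have h2 := hlb0i a ha
            linarith
        · exact padd_good (by linarith) hbgood
        · have := padd_sum (i+1) (K-1-i) base
          rw [hst] at this
          have h2sum : (padd (i+1) (K-1-i) base).sum * 2 = n * 2 := by
            rw [this]
            have : n = S + 3^i := by omega
            linarith
          linarith
        · rw [padd_length]
          simp [hbase, padd_length]
          omega
        · intro a ha
          rcases padd_mem.1 ha with ⟨j, _, _, rfl⟩ | ha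
          · exact one_le_pow3 j
          rcases List.mem_cons.1 ha with rfl | ha
          · linarith
          rcases List.mem_cons.1 ha with rfl | ha
          · linarith
          · exact hlb0i a ha
    · -- generic case: F = {m} ∪ powers
      have hgood : good (m :: padd 0 K []) := ⟨by linarith, hg0⟩
      refine assemble n (K+1) (m :: padd 0 K []) (List.nodup_cons.2 ⟨hmem, hnd0⟩)
        hgood ?_ ?_ ?_ hceil
      · simp only [List.sum_cons, ← hSdef, hmdef]; ring
      · simp [padd_length]
      · intro a ha
        rcases List.mem_cons.1 ha with rfl | ha
        · exact hm1
        · exact hlb0 a ha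
end

section
/- Let a be a real number with a ≥ −log 2, and set n = ⌊e^a⌋. Then the minimal cardinality of a finite set generating at level n equals ⌈(a + log 2)/log 3⌉ − 1_L(a), where 1_L is the characteristic function of the exceptional set L. -/
/-!
A set generating at level `n` maps `{-1, 0, 1} ^ F` onto `[-n, n]`, so `2n + 1 ≤ 3 ^ #F`.
Conversely, adding to a set generating at level `n'` an element `c` with `n' < c ≤ 2n' + 1`
yields a set generating at level `n' + c`, and iterating this greedily reaches every `n` with
`⌈log₃ (2n + 1)⌉` elements. So the minimal cardinality is `Nat.clog 3 (2n + 1)`.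

With `t = 2e^a`, the odd number `2⌊e^a⌋ + 1` is at most `3 ^ k` iff `t < 3 ^ k + 1`, whereas
`⌈(a + log 2) / log 3⌉` is the least `k` with `t ≤ 3 ^ k`. These two thresholds differ (by one)
exactly when `3 ^ k < t < 3 ^ k + 1` for some `k`, i.e. when `a ∈ L`.
-/

open Classical

/-- The exceptional set `L`. -/
def excL : Set ℝ :=
  {a | ∃ k : ℕ, (k : ℝ) * Real.log 3 < a + Real.log 2 ∧
    a + Real.log 2 < (k : ℝ) * Real.log 3 + Real.log (1 + (3 : ℝ) ^ (-(k : ℤ)))}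

open Finset Real

theorem GeneratesAtLevel.two_mul_add_one_le_three_pow_card_s7 {n : ℤ} {F : Finset ℤ}
    (h : GeneratesAtLevel n F) : 2 * n + 1 ≤ 3 ^ #F := by
  have hsub : Icc (-n) n ⊆ (Fintype.piFinset fun _ : F => Icc (-1 : ℤ) 1).image
      fun α => ∑ j : F, α j * j := by
    intro x hx
    obtain ⟨α, hα, rfl, -⟩ := h.2 x (abs_le.2 (mem_Icc.1 hx))
    refine mem_image.2 ⟨fun j => α j, Fintype.mem_piFinset.2 fun j => ?_,
      sum_coe_sort F fun j => α j * j⟩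
    rcases hα j j.2 with h | h | h <;> simp [h]
  have hcard := (card_le_card hsub).trans card_image_le
  rw [Int.card_Icc, Fintype.card_piFinset, prod_const, card_univ, Fintype.card_coe,
    show n + 1 - -n = 2 * n + 1 by ring] at hcard
  exact (Int.self_le_toNat _).trans (by exact_mod_cast hcard)

theorem generatesAtLevel_zero : GeneratesAtLevel 0 ∅ :=
  ⟨by simp, fun x hx => ⟨0, by simp, by simpa using hx, by simp⟩⟩

theorem generatesAtLevel_two : GeneratesAtLevel 2 {1, 2} := by
  refine ⟨by decide, fun x hx => ⟨fun j => if j = 2 then x.tdiv 2 else x.tmod 2, ?_⟩⟩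
  obtain ⟨hx₁, hx₂⟩ := abs_le.1 hx
  rw [sum_pair (by norm_num), sum_pair (by norm_num)]
  interval_cases x <;> decide

theorem GeneratesAtLevel.insert {n c : ℤ} {F : Finset ℤ} (h : GeneratesAtLevel n F)
    (hnc : n < c) (hc : c ≤ 2 * n + 1) : GeneratesAtLevel (n + c) (insert c F) := by
  have hcF : c ∉ F := fun hc' => (h.1 c hc').2.not_gt hnc
  refine ⟨fun j hj => ?_, fun x hx => ?_⟩
  · rcases mem_insert.1 hj with rfl | hj
    · omega
    · have := h.1 j hj; omega
  -- subtract `s * c` so that the remainder is representable at level `n`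
  obtain ⟨s, hs, hxs, hsc⟩ :
      ∃ s : ℤ, (s = -1 ∨ s = 0 ∨ s = 1) ∧ |x - s * c| ≤ n ∧ |s * c| ≤ c := by
    rw [abs_le] at hx
    by_cases hx' : |x| ≤ n
    · exact ⟨0, by simp, by simpa using hx', by simp; omega⟩
    rw [abs_le] at hx'
    rcases le_or_gt 0 x with hx0 | hx0
    · exact ⟨1, by simp, by rw [one_mul, abs_le]; omega, by rw [one_mul, abs_le]; omega⟩
    · exact ⟨-1, by simp, by rw [neg_one_mul, abs_le]; omega,
        by rw [neg_one_mul, abs_neg, abs_le]; omega⟩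
  obtain ⟨α, hα, hsum, hmass⟩ := h.2 _ hxs
  have hupdate : ∀ j ∈ F, Function.update α c s j = α j := fun j hj =>
    Function.update_of_ne (ne_of_mem_of_not_mem hj hcF) _ _
  refine ⟨Function.update α c s, fun j hj => ?_, ?_, ?_⟩
  · rcases mem_insert.1 hj with rfl | hj
    · rwa [Function.update_self]
    · rw [hupdate j hj]; exact hα j hj
  all_goals
    rw [sum_insert hcF, Function.update_self, sum_congr rfl fun j hj => by rw [hupdate j hj]]
    omega

theorem exists_generatesAtLevel_card_le {n : ℤ} {m : ℕ} (hn : 0 ≤ n) (h : 2 * n + 1 ≤ 3 ^ m) :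
    ∃ F, GeneratesAtLevel n F ∧ #F ≤ m := by
  induction m generalizing n with
  | zero => exact ⟨∅, by simpa [show n = 0 by omega] using generatesAtLevel_zero, by simp⟩
  | succ m ih =>
    obtain rfl | rfl | hn3 : n = 0 ∨ n = 2 ∨ (n = 1 ∨ 3 ≤ n) := by omega
    · exact ⟨∅, generatesAtLevel_zero, by simp⟩
    · have hm : 1 ≤ m := by
        by_contra! hm
        simp [Nat.lt_one_iff.1 hm] at h
      exact ⟨{1, 2}, generatesAtLevel_two, by rw [card_pair (by norm_num)]; omega⟩
    -- Greedy step from `n' = ⌊(n + 1) / 3⌋`, the least `n'` with `n - n' ≤ 2 * n' + 1`; it still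
    -- satisfies `2 * n' + 1 ≤ 3 ^ m`. For `n = 2` the new element `n - n'` would equal `n'`.
    have hodd : (3 : ℤ) ^ m % 2 = 1 := Int.odd_iff.1 (Odd.pow (by decide))
    rw [pow_succ] at h
    obtain ⟨F, hF, hcard⟩ := ih (n := (n + 1) / 3) (by omega) (by omega)
    refine ⟨insert (n - (n + 1) / 3) F, ?_, (card_insert_le _ _).trans (by omega)⟩
    simpa using hF.insert (c := n - (n + 1) / 3) (by omega) (by omega)

theorem isLeast_card_generatesAtLevel (n : ℕ) :
    IsLeast {k | ∃ F, GeneratesAtLevel n F ∧ #F = k} (Nat.clog 3 (2 * n + 1)) := by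
  have hlower : ∀ F, GeneratesAtLevel n F → Nat.clog 3 (2 * n + 1) ≤ #F := fun F hF =>
    Nat.clog_le_of_le_pow (by exact_mod_cast hF.two_mul_add_one_le_three_pow_card_s7)
  obtain ⟨F, hF, hcard⟩ := exists_generatesAtLevel_card_le (n := n) (Int.natCast_nonneg n)
    (by exact_mod_cast Nat.le_pow_clog (by norm_num) (2 * n + 1))
  exact ⟨⟨F, hF, le_antisymm hcard (hlower F hF)⟩, fun k ⟨F, hF, hk⟩ => hk ▸ hlower F hF⟩

theorem two_mul_floor_add_one_le_iff {x : ℝ} (hx : 0 ≤ x) {N : ℕ} (hN : Odd N) :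
    2 * ⌊x⌋₊ + 1 ≤ N ↔ 2 * x < N + 1 := by
  obtain ⟨j, rfl⟩ := hN
  calc 2 * ⌊x⌋₊ + 1 ≤ 2 * j + 1 ↔ ⌊x⌋₊ < j + 1 := by omega
    _ ↔ x < j + 1 := by exact_mod_cast Nat.floor_lt hx
    _ ↔ 2 * x < ↑(2 * j + 1) + 1 := by push_cast; constructor <;> intro h <;> linarith

theorem eq_add_ite_of_forall_le_iff {b t : ℝ} (hb : 2 ≤ b) {p q : ℕ}
    (hp : ∀ k : ℕ, p ≤ k ↔ t ≤ b ^ k) (hq : ∀ k : ℕ, q ≤ k ↔ t < b ^ k + 1) :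
    p = q + if ∃ k : ℕ, b ^ k < t ∧ t < b ^ k + 1 then 1 else 0 := by
  have hqp : q ≤ p := (hq p).2 (((hp p).1 le_rfl).trans_lt (lt_add_one _))
  have hpq : p ≤ q + 1 := (hp _).2 <| ((hq q).1 le_rfl).le.trans <| by
    rw [pow_succ]; nlinarith [one_le_pow₀ (n := q) (by linarith : 1 ≤ b)]
  split_ifs with hL
  · obtain ⟨k, hk, hk'⟩ := hL
    have := (hq k).2 hk'
    have := mt (hp k).1 hk.not_ge
    omega
  · by_contra hne
    have hp' : p = q + 1 := by omega
    exact hL ⟨q, not_le.1 fun h => by have := (hp q).2 h; omega, (hq q).1 le_rfl⟩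

theorem log_two_mul_exp (a : ℝ) : log (2 * exp a) = a + log 2 := by
  rw [log_mul two_ne_zero (exp_pos a).ne', log_exp, add_comm]

theorem mem_excL_iff {a : ℝ} :
    a ∈ excL ↔ ∃ k : ℕ, (3 : ℝ) ^ k < 2 * exp a ∧ 2 * exp a < 3 ^ k + 1 := by
  refine exists_congr fun k => and_congr ?_ ?_
  · rw [← log_two_mul_exp, ← log_pow, log_lt_log_iff (by positivity) (by positivity)]
  · rw [← log_two_mul_exp, ← log_pow, ← log_mul (by positivity) (by positivity),
      log_lt_log_iff (by positivity) (by positivity), mul_add, mul_one, zpow_neg, zpow_natCast,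
      mul_inv_cancel₀ (by positivity)]

theorem ceil_sub_indicator_excL_eq_clog {a : ℝ} (ha : -log 2 ≤ a) :
    ⌈(a + log 2) / log 3⌉ - (if a ∈ excL then 1 else 0) = Nat.clog 3 (2 * ⌊exp a⌋₊ + 1) := by
  have ht : 1 ≤ 2 * exp a := by
    have := exp_le_exp.2 ha
    rw [exp_neg, exp_log two_pos] at this
    linarith
  have hp : ∀ k : ℕ, ⌈logb 3 (2 * exp a)⌉₊ ≤ k ↔ 2 * exp a ≤ 3 ^ k := fun k => by
    rw [Nat.ceil_le, logb_le_iff_le_rpow (by norm_num) (by positivity), rpow_natCast]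
  have hq : ∀ k : ℕ, Nat.clog 3 (2 * ⌊exp a⌋₊ + 1) ≤ k ↔ 2 * exp a < 3 ^ k + 1 := fun k => by
    rw [Nat.clog_le_iff_le_pow (by norm_num),
      two_mul_floor_add_one_le_iff (exp_pos a).le (Odd.pow (by decide))]
    push_cast; rfl
  rw [← log_two_mul_exp, ← logb, ← Int.natCast_ceil_eq_ceil (logb_nonneg (by norm_num) ht),
    eq_add_ite_of_forall_le_iff (by norm_num) hp hq, ← mem_excL_iff]
  split_ifs <;> push_cast <;> ring

/-- for `a ≥ −log 2` and `n = ⌊e^a⌋`, the minimal cardinality of a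
set generating at level `n` equals `⌈(a + log 2)/log 3⌉ − 1_L(a)`. -/
theorem stmt7 (a : ℝ) (ha : -Real.log 2 ≤ a) :
    (∃ F : Finset ℤ, GeneratesAtLevel ⌊Real.exp a⌋ F ∧
      (F.card : ℤ) =
        ⌈(a + Real.log 2) / Real.log 3⌉ - (if a ∈ excL then 1 else 0)) ∧
    ∀ F : Finset ℤ, GeneratesAtLevel ⌊Real.exp a⌋ F →
      ⌈(a + Real.log 2) / Real.log 3⌉ - (if a ∈ excL then 1 else 0) ≤
        (F.card : ℤ) := by
  obtain ⟨⟨F, hF, hcard⟩, hmin⟩ := isLeast_card_generatesAtLevel ⌊exp a⌋₊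
  rw [ceil_sub_indicator_excL_eq_clog ha, ← Int.natCast_floor_eq_floor (exp_pos a).le]
  exact ⟨⟨F, hF, by rw [hcard]⟩, fun F hF => by exact_mod_cast hmin ⟨F, hF, rfl⟩⟩
end

section
/- Let λ > 0 be a real number and let d be the quotient metric on ℝ/ℤ of total length 1. If λ ≥ 1/2, then the empty set generates ℝ/ℤ at tolerance λ (i.e. every x ∈ ℝ/ℤ satisfies d(x, 0) ≤ λ), so the minimal cardinality of a generating set is 0. If 0 < λ < 1/2, then the minimal cardinality of a finite subset of ℝ/ℤ generating at tolerance λ equals ⌈(−log λ − log 2)/log 3⌉. -/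
/-- A finite set `F ⊂ ℝ/ℤ` *generates at tolerance* `λ` if distinct elements of
`F` are at distance `> λ` and every `x ∈ ℝ/ℤ` is at distance `≤ λ` from some
sum `∑_{j∈F} α(j)·j` with `α(j) ∈ {-1,0,1}`. -/
def GeneratesAtTolerance (lam : ℝ) (F : Finset (AddCircle (1 : ℝ))) : Prop :=
  (∀ x ∈ F, ∀ y ∈ F, x ≠ y → lam < dist x y) ∧
  ∀ x : AddCircle (1 : ℝ), ∃ α : AddCircle (1 : ℝ) → ℤ,
    (∀ j ∈ F, α j = -1 ∨ α j = 0 ∨ α j = 1) ∧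
    dist x (∑ j ∈ F, α j • j) ≤ lam

/-!
Lower bound: the at most `3^|F|` signed sums of a generating set `F` are `λ`-dense, so the closed
`λ`-balls around them, each of measure at most `2λ`, cover the circle and `1 ≤ 2λ·3^|F|`.
Upper bound: for the least `n` with `1 ≤ 2λ·3^n`, the points `3^i/3^n` (`i < n`) are
`2/3^n > λ` apart, and by balanced ternary expansion their signed sums reach every multiple of
`3^{-n}`, which form a `1/(2·3^n) ≤ λ`-dense set. That least `n` is `⌈log₃ (1/(2λ))⌉`.
-/

open Finset MeasureTheory

local notation "𝕋" => AddCircle (1 : ℝ)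

theorem exists_balancedTernary_modEq (n : ℕ) (m : ℤ) :
    ∃ c : ℕ → ℤ, (∀ i, c i = -1 ∨ c i = 0 ∨ c i = 1) ∧
      ∑ i ∈ range n, c i * 3 ^ i ≡ m [ZMOD 3 ^ n] := by
  induction n generalizing m with
  | zero => exact ⟨0, fun _ => by simp, by simp [Int.modEq_one]⟩
  | succ n ih =>
    -- the lowest digit `m - 3 * ((m + 1) / 3)` lies in `{-1, 0, 1}`
    obtain ⟨c, hc, hsum⟩ := ih ((m + 1) / 3)
    refine ⟨fun | 0 => m - 3 * ((m + 1) / 3) | i + 1 => c i, ?_, ?_⟩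
    · rintro (_ | i)
      · dsimp only
        omega
      · exact hc i
    · have := (hsum.mul_left' (c := 3)).add_right (m - 3 * ((m + 1) / 3))
      rw [sum_range_succ', pow_succ']
      convert this using 2
      · rw [mul_sum]
        exact sum_congr rfl fun i _ => by ring
      · ring
      · ring

theorem AddCircle.le_card_mul_of_forall_exists_dist_le {T : ℝ} [Fact (0 < T)]
    {S : Finset (AddCircle T)} {r : ℝ} (h : ∀ x, ∃ s ∈ S, dist x s ≤ r) :
    T ≤ S.card * (2 * r) := by
  have hcover : (Set.univ : Set (AddCircle T)) ⊆ ⋃ s ∈ S, Metric.closedBall s r := fun x _ => by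
    obtain ⟨s, hs, hxs⟩ := h x
    exact Set.mem_biUnion hs hxs
  have hvol := (measure_mono (μ := volume) hcover).trans (measure_biUnion_finset_le S _)
  simp only [AddCircle.measure_univ, AddCircle.volume_closedBall, sum_const, nsmul_eq_mul] at hvol
  rw [← ENNReal.ofReal_natCast, ← ENNReal.ofReal_mul (by positivity),
    ENNReal.ofReal_le_ofReal_iff'] at hvol
  rcases hvol with hvol | hvol
  · exact hvol.trans (by gcongr; exact min_le_right _ _)
  · exact absurd hvol (not_le.2 (Fact.out : 0 < T))

theorem UnitAddCircle.le_norm_coe_of_le_of_le {a x : ℝ} (h₁ : a ≤ x) (h₂ : x ≤ 1 - a) :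
    a ≤ ‖(x : 𝕋)‖ := by
  rw [UnitAddCircle.norm_eq]
  rcases le_or_gt (round x) 0 with h | h
  · have : (round x : ℝ) ≤ 0 := by exact_mod_cast h
    linarith [le_abs_self (x - round x)]
  · have : (1 : ℝ) ≤ round x := by exact_mod_cast h
    linarith [neg_abs_le (x - round x)]

theorem GeneratesAtTolerance.one_le_two_mul_mul_three_pow {lam : ℝ} {F : Finset 𝕋}
    (hF : GeneratesAtTolerance lam F) : 1 ≤ 2 * lam * 3 ^ F.card := by
  classical
  set S := (Fintype.piFinset fun _ : F => ({-1, 0, 1} : Finset ℤ)).image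
    fun α : F → ℤ => ∑ j, α j • (j : 𝕋)
  have hS : S.card ≤ 3 ^ F.card := card_image_le.trans (by simp)
  have hcover : ∀ x, ∃ s ∈ S, dist x s ≤ lam := by
    intro x
    obtain ⟨α, hα, hx⟩ := hF.2 x
    refine ⟨_, mem_image_of_mem _ (Fintype.mem_piFinset.2 fun j => ?_ :
      (fun j : F => α j) ∈ _), ?_⟩
    · simpa using hα j j.2
    · rwa [sum_coe_sort F fun j => α j • j]
  have h := AddCircle.le_card_mul_of_forall_exists_dist_le hcover
  have hlam : 0 < 2 * lam := pos_of_mul_pos_right (one_pos.trans_le h) (by positivity)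
  calc (1 : ℝ) ≤ S.card * (2 * lam) := h
    _ ≤ 3 ^ F.card * (2 * lam) := by gcongr; exact_mod_cast hS
    _ = 2 * lam * 3 ^ F.card := mul_comm _ _

section TernaryPoints

variable (n : ℕ)

/-- The point `3^i / 3^n`, written as a multiple of the element `3^{-n}` of order `3^n`. -/
noncomputable def ternaryPoint (i : Fin n) : 𝕋 :=
  (3 ^ (i : ℕ) : ℤ) • ((1 / (3 ^ n : ℕ) : ℝ) : 𝕋)

noncomputable def ternaryPoints : Finset 𝕋 := univ.image (ternaryPoint n)

variable {n}

theorem two_div_three_pow_le_dist_ternaryPoint {i j : Fin n} (hij : i < j) :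
    2 / 3 ^ n ≤ dist (ternaryPoint n i) (ternaryPoint n j) := by
  have h₁ : (3 : ℝ) * 3 ^ (i : ℕ) ≤ 3 ^ (j : ℕ) := by
    rw [← pow_succ']; exact pow_le_pow_right₀ (by norm_num) hij
  have h₂ : (3 : ℝ) * 3 ^ (j : ℕ) ≤ 3 ^ n := by
    rw [← pow_succ']; exact pow_le_pow_right₀ (by norm_num) j.isLt
  have h₃ : (1 : ℝ) ≤ 3 ^ (i : ℕ) := one_le_pow₀ (by norm_num)
  have h3n : (0 : ℝ) < 3 ^ n := by positivity
  rw [dist_comm, dist_eq_norm, ternaryPoint, ternaryPoint, ← sub_smul, ← AddCircle.coe_zsmul,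
    zsmul_eq_mul]
  push_cast
  apply UnitAddCircle.le_norm_coe_of_le_of_le
  · rw [mul_one_div, div_le_div_iff_of_pos_right h3n]; linarith
  · rw [mul_one_div, le_sub_iff_add_le, ← add_div, div_le_one h3n]; linarith

theorem ternaryPoint_injective : Function.Injective (ternaryPoint n) := by
  intro i j hij
  by_contra hne
  have hpos : (0 : ℝ) < 2 / 3 ^ n := by positivity
  rcases lt_or_gt_of_ne hne with h | h
  · linarith [two_div_three_pow_le_dist_ternaryPoint h, dist_le_zero.2 hij]
  · linarith [two_div_three_pow_le_dist_ternaryPoint h, dist_le_zero.2 hij.symm]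

theorem card_ternaryPoints : (ternaryPoints n).card = n := by
  rw [ternaryPoints, card_image_of_injective _ ternaryPoint_injective, card_univ, Fintype.card_fin]

theorem exists_dist_sum_ternaryPoints_le (x : 𝕋) :
    ∃ α : 𝕋 → ℤ, (∀ j ∈ ternaryPoints n, α j = -1 ∨ α j = 0 ∨ α j = 1) ∧
      dist x (∑ j ∈ ternaryPoints n, α j • j) ≤ 1 / 2 / 3 ^ n := by
  induction x using QuotientAddGroup.induction_on with | H x =>
  obtain ⟨c, hc, hmod⟩ := exists_balancedTernary_modEq n (round (3 ^ n * x))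
  refine ⟨Function.extend (ternaryPoint n) (fun i => c i) 0, ?_, ?_⟩
  · simp only [ternaryPoints, mem_image, mem_univ, true_and]
    rintro _ ⟨i, rfl⟩
    rw [ternaryPoint_injective.extend_apply]
    exact hc i
  have hsum : ∑ j ∈ ternaryPoints n, Function.extend (ternaryPoint n) (fun i => c i) 0 j • j
      = round (3 ^ n * x) • ((1 / (3 ^ n : ℕ) : ℝ) : 𝕋) := by
    rw [ternaryPoints, sum_image ternaryPoint_injective.injOn]
    simp only [ternaryPoint_injective.extend_apply]
    simp only [ternaryPoint, smul_smul, ← sum_smul]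
    rw [zsmul_eq_zsmul_iff_modEq, AddCircle.addOrderOf_period_div (by positivity),
      Fin.sum_univ_eq_sum_range (fun i => c i * 3 ^ i)]
    exact_mod_cast hmod
  rw [hsum, ← AddCircle.coe_zsmul, dist_eq_norm, ← AddCircle.coe_sub]
  refine QuotientAddGroup.norm_mk_le_norm.trans ?_
  have h3n : (0 : ℝ) < 3 ^ n := by positivity
  have hdiff : x - round (3 ^ n * x) • (1 / ((3 ^ n : ℕ) : ℝ))
      = (3 ^ n * x - round (3 ^ n * x)) / 3 ^ n := by
    rw [zsmul_eq_mul]; push_cast; field_simp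
  rw [Real.norm_eq_abs, hdiff, abs_div, abs_of_pos h3n, div_le_div_iff_of_pos_right h3n]
  exact abs_sub_round _

theorem generatesAtTolerance_ternaryPoints {lam : ℝ} (h₁ : 1 ≤ 2 * lam * 3 ^ n)
    (h₂ : lam * 3 ^ n < 2) : GeneratesAtTolerance lam (ternaryPoints n) := by
  have h3n : (0 : ℝ) < 3 ^ n := by positivity
  refine ⟨?_, fun x => ?_⟩
  · simp only [ternaryPoints, mem_image, mem_univ, true_and]
    rintro _ ⟨i, rfl⟩ _ ⟨j, rfl⟩ hij
    have hlam : lam < 2 / 3 ^ n := by rwa [lt_div_iff₀ h3n]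
    rcases lt_or_gt_of_ne (ne_of_apply_ne _ hij) with h | h
    · exact hlam.trans_le (two_div_three_pow_le_dist_ternaryPoint h)
    · rw [dist_comm]
      exact hlam.trans_le (two_div_three_pow_le_dist_ternaryPoint h)
  · obtain ⟨α, hα, hx⟩ := exists_dist_sum_ternaryPoints_le (n := n) x
    refine ⟨α, hα, hx.trans ?_⟩
    rw [div_le_iff₀ h3n, div_le_iff₀ two_pos]
    linarith

end TernaryPoints

theorem Int.clog_inv_le_iff_one_le_mul_zpow {b : ℕ} (hb : 1 < b) {r : ℝ} (hr : 0 < r) (k : ℤ) :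
    Int.clog b r⁻¹ ≤ k ↔ 1 ≤ r * (b : ℝ) ^ k := by
  rw [← Int.le_zpow_iff_clog_le hb (inv_pos.2 hr), inv_le_iff_one_le_mul₀ hr, mul_comm]

theorem Int.mul_zpow_clog_inv_lt {b : ℕ} (hb : 1 < b) {r : ℝ} (hr : 0 < r) :
    r * (b : ℝ) ^ Int.clog b r⁻¹ < b := by
  have hb' : (0 : ℝ) < b := by positivity
  have h := Int.zpow_pred_clog_lt_self hb (inv_pos.2 hr)
  rwa [zpow_sub_one₀ hb'.ne', mul_inv_lt_iff₀ hb', lt_inv_mul_iff₀ hr] at h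

theorem ceil_neg_log_sub_log_two_div_log_three_eq_clog {lam : ℝ} (hlam : 0 < lam) :
    ⌈(-Real.log lam - Real.log 2) / Real.log 3⌉ = Int.clog 3 (2 * lam)⁻¹ := by
  rw [← Real.ceil_logb_natCast (by positivity)]
  congr 1
  rw [Real.logb, Real.log_inv, Real.log_mul two_ne_zero hlam.ne']
  push_cast
  ring

/-- if `λ ≥ 1/2` the empty set generates `ℝ/ℤ` at tolerance `λ`
(every point is within `λ` of `0`), so the minimal cardinality of a generating
set is `0`; if `0 < λ < 1/2` the minimal cardinality of a generating set equals
`⌈(−log λ − log 2)/log 3⌉`. -/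
theorem stmt8 (lam : ℝ) (hlam : 0 < lam) :
    (1 / 2 ≤ lam →
      GeneratesAtTolerance lam ∅ ∧ ∀ x : AddCircle (1 : ℝ), dist x 0 ≤ lam) ∧
    (lam < 1 / 2 →
      (∃ F : Finset (AddCircle (1 : ℝ)), GeneratesAtTolerance lam F ∧
        (F.card : ℤ) = ⌈(-Real.log lam - Real.log 2) / Real.log 3⌉) ∧
      ∀ F : Finset (AddCircle (1 : ℝ)), GeneratesAtTolerance lam F →
        ⌈(-Real.log lam - Real.log 2) / Real.log 3⌉ ≤ (F.card : ℤ)) := by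
  refine ⟨fun hhalf => ?_, fun hlt => ?_⟩
  · have hball (x : 𝕋) : dist x 0 ≤ lam := by
      rw [dist_zero_right]
      linarith [AddCircle.norm_le_half_period (p := (1 : ℝ)) (x := x) one_ne_zero,
        abs_one (α := ℝ)]
    exact ⟨⟨by simp, fun x => ⟨0, by simp, by simpa using hball x⟩⟩, hball⟩
  have hr : 0 < 2 * lam := by positivity
  obtain ⟨n, hn⟩ : ∃ n : ℕ, Int.clog 3 (2 * lam)⁻¹ = n :=
    ⟨_, Int.clog_of_one_le_right 3 ((one_le_inv₀ hr).2 (by linarith))⟩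
  have hle (k : ℕ) : (n : ℤ) ≤ k ↔ 1 ≤ 2 * lam * 3 ^ k := by
    rw [← hn, Int.clog_inv_le_iff_one_le_mul_zpow (by norm_num) hr]
    norm_cast
  have hlt : lam * 3 ^ n < 2 := by
    have h := Int.mul_zpow_clog_inv_lt (b := 3) (by norm_num) hr
    rw [hn, zpow_natCast] at h
    push_cast at h
    linarith
  rw [ceil_neg_log_sub_log_two_div_log_three_eq_clog hlam, hn]
  exact ⟨⟨ternaryPoints n, generatesAtTolerance_ternaryPoints ((hle n).1 le_rfl) hlt,
    by rw [card_ternaryPoints]⟩, fun F hF => (hle _).2 hF.one_le_two_mul_mul_three_pow⟩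
end

section
/- Let λ, μ > 0 be real numbers, ℓ ≥ 1 a natural number, and f : ℝ → ℝ^ℓ a function such that: (a) Σ_{i=1}^ℓ |f_i(x)| ≤ μ for every x with |x| ≤ λ, and (b) f(x + y) = f(x) + f(y) for all x, y with |x| + |y| ≤ λ. Then there exists a vector r = (r_1, …, r_ℓ) ∈ ℝ^ℓ with Σ_{i=1}^ℓ |r_i| ≤ μ/λ such that f(x) = (r_1 x, …, r_ℓ x) for all x with |x| ≤ λ. -/
/-!
An additive germ `f` bounded on `[-λ, λ]` is linear there. Subtracting `x ↦ (x / λ) • f λ`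
reduces to a bounded germ `g` with `g λ = 0`. Then `g` vanishes at every `λ / n` (as
`n • g (λ / n) = g λ`), hence at all its multiples in `[0, λ]`, so for `0 ≤ x ≤ λ` the value `g x`
equals `g b` with `0 ≤ b < λ / n`, and `n • g b = g (n b)` forces `‖g b‖ ≤ C / n`. Negative `x`
follow by applying this to `x ↦ g (-x)`, which also vanishes at `λ`.
-/

def IsAdditiveGerm {E : Type*} [Add E] (lam : ℝ) (f : ℝ → E) : Prop :=
  ∀ x y : ℝ, |x| + |y| ≤ lam → f (x + y) = f x + f y

namespace IsAdditiveGerm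

section Group

variable {E : Type*} [AddCommGroup E] {lam : ℝ} {f : ℝ → E}

theorem map_zero (hf : IsAdditiveGerm lam f) (hlam : 0 ≤ lam) : f 0 = 0 := by
  have h := hf 0 0 (by simpa using hlam)
  rw [add_zero] at h
  exact left_eq_add.mp h

theorem map_neg (hf : IsAdditiveGerm lam f) {x : ℝ} (hx : 2 * |x| ≤ lam) :
    f (-x) = -f x := by
  have h := hf x (-x) (by rw [abs_neg]; linarith)
  rw [add_neg_cancel, hf.map_zero (by linarith [abs_nonneg x])] at h
  exact (neg_eq_of_add_eq_zero_right h.symm).symm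

theorem comp_neg (hf : IsAdditiveGerm lam f) : IsAdditiveGerm lam (fun x => f (-x)) := by
  intro x y hxy
  show f (-(x + y)) = f (-x) + f (-y)
  rw [neg_add]
  exact hf _ _ (by simpa only [abs_neg] using hxy)

theorem map_neg_eq_zero_of_map_eq_zero (hf : IsAdditiveGerm lam f) (hlam : 0 < lam)
    (h : f lam = 0) : f (-lam) = 0 := by
  have hhalf : 2 * |lam / 2| ≤ lam := by rw [abs_of_pos (half_pos hlam)]; linarith
  have hsplit : ∀ s : ℝ, |s| = lam → f s = f (s / 2) + f (s / 2) := fun s hs => by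
    rw [← hf _ _ (by rw [abs_div, hs]; norm_num), add_halves]
  rw [hsplit (-lam) (by simp [hlam.le]), neg_div, hf.map_neg hhalf, ← neg_add,
    ← hsplit lam (abs_of_pos hlam), h, neg_zero]

end Group

section Module

variable {E : Type*} [AddCommGroup E] [Module ℝ E] {lam : ℝ} {f : ℝ → E}

theorem map_natCast_mul (hf : IsAdditiveGerm lam f) (n : ℕ) {t : ℝ} (ht : n * |t| ≤ lam) :
    f (n * t) = (n : ℝ) • f t := by
  induction n with
  | zero => simpa using hf.map_zero (by simpa using ht)
  | succ n ih =>
    push_cast at ht ⊢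
    have hsum : |(n : ℝ) * t| + |t| ≤ lam := by
      rw [abs_mul, Nat.abs_cast]; linarith
    rw [add_mul, one_mul, hf _ _ hsum, ih (by linarith [abs_nonneg t]), add_smul, one_smul]

theorem sub_mul_smul (hf : IsAdditiveGerm lam f) (c : ℝ) (v : E) :
    IsAdditiveGerm lam (fun x => f x - (c * x) • v) := by
  intro x y hxy
  simp only [hf x y hxy, mul_add, add_smul]
  abel

end Module

section Normed

variable {E : Type*} [NormedAddCommGroup E] [NormedSpace ℝ E] {lam C : ℝ} {f : ℝ → E}

theorem norm_le_div (hf : IsAdditiveGerm lam f) (hC : ∀ x, |x| ≤ lam → ‖f x‖ ≤ C)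
    {n : ℕ} (hn : 0 < n) {y : ℝ} (hy : n * |y| ≤ lam) : ‖f y‖ ≤ C / n := by
  have hnR : (0 : ℝ) < n := by exact_mod_cast hn
  have h := hC (n * y) (by rwa [abs_mul, Nat.abs_cast])
  rw [hf.map_natCast_mul n hy, norm_smul, Real.norm_natCast] at h
  rwa [le_div_iff₀ hnR, mul_comm]

theorem eq_zero_of_nonneg (hf : IsAdditiveGerm lam f) (hlam : 0 < lam)
    (hC : ∀ x, |x| ≤ lam → ‖f x‖ ≤ C) (h : f lam = 0) {x : ℝ} (hx₀ : 0 ≤ x)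
    (hx : x ≤ lam) : f x = 0 := by
  suffices hsmall : ∀ n : ℕ, 0 < n → ‖f x‖ ≤ C / n by
    refine norm_le_zero_iff.mp (ge_of_tendsto (tendsto_const_div_atTop_nhds_zero_nat C) ?_)
    filter_upwards [Filter.eventually_gt_atTop 0] using hsmall
  intro n hn
  have hnR : (0 : ℝ) < n := by exact_mod_cast hn
  set k := ⌊x / (lam / n)⌋₊
  have hstep : 0 < lam / n := div_pos hlam hnR
  have hk : k * (lam / n) ≤ x := (le_div_iff₀ hstep).mp (Nat.floor_le (by positivity))
  have hb : n * |x - k * (lam / n)| ≤ lam := by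
    have : x < (k + 1) * (lam / n) := (div_lt_iff₀ hstep).mp (Nat.lt_floor_add_one _)
    rw [abs_of_nonneg (by linarith), ← le_div_iff₀' hnR]
    linarith
  have hunit : f (lam / n) = 0 := by
    have := hf.map_natCast_mul n (t := lam / n)
      (by rw [abs_of_pos hstep, mul_div_cancel₀ _ hnR.ne'])
    rwa [mul_div_cancel₀ _ hnR.ne', h, eq_comm, smul_eq_zero_iff_right hnR.ne'] at this
  have hsplit := hf (k * (lam / n)) (x - k * (lam / n))
    (by rw [abs_of_nonneg (by positivity), abs_of_nonneg (by linarith)]; linarith)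
  rw [add_sub_cancel, hf.map_natCast_mul k (by rw [abs_of_pos hstep]; linarith), hunit,
    smul_zero, zero_add] at hsplit
  rw [hsplit]
  exact hf.norm_le_div hC hn hb

theorem eq_zero (hf : IsAdditiveGerm lam f) (hlam : 0 < lam)
    (hC : ∀ x, |x| ≤ lam → ‖f x‖ ≤ C) (h : f lam = 0) {x : ℝ} (hx : |x| ≤ lam) :
    f x = 0 := by
  rcases le_total 0 x with hx₀ | hx₀
  · exact hf.eq_zero_of_nonneg hlam hC h hx₀ (le_of_abs_le hx)
  · have hneg := hf.comp_neg.eq_zero_of_nonneg hlam (fun y hy => hC (-y) (by rwa [abs_neg]))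
      (hf.map_neg_eq_zero_of_map_eq_zero hlam h) (neg_nonneg.mpr hx₀) (by linarith [neg_abs_le x])
    simpa using hneg

theorem eq_div_smul (hf : IsAdditiveGerm lam f) (hlam : 0 < lam)
    (hC : ∀ x, |x| ≤ lam → ‖f x‖ ≤ C) {x : ℝ} (hx : |x| ≤ lam) :
    f x = (x / lam) • f lam := by
  have hg := hf.sub_mul_smul lam⁻¹ (f lam)
  have hgC : ∀ y, |y| ≤ lam → ‖f y - (lam⁻¹ * y) • f lam‖ ≤ C + C := fun y hy => by
    refine (norm_sub_le _ _).trans (add_le_add (hC y hy) ?_)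
    rw [norm_smul, Real.norm_eq_abs, abs_mul, abs_inv, abs_of_pos hlam]
    calc lam⁻¹ * |y| * ‖f lam‖ ≤ 1 * ‖f lam‖ := by
          gcongr
          exact inv_mul_le_one_of_le₀ hy hlam.le
      _ ≤ C := by rw [one_mul]; exact hC lam (abs_of_pos hlam).le
  have := hg.eq_zero hlam hgC (by rw [inv_mul_cancel₀ hlam.ne', one_smul, sub_self]) hx
  rwa [sub_eq_zero, inv_mul_eq_div] at this

end Normed

end IsAdditiveGerm

theorem pi_norm_le_sum_norm {ι : Type*} [Fintype ι] {E : ι → Type*}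
    [∀ i, SeminormedAddCommGroup (E i)] (v : ∀ i, E i) : ‖v‖ ≤ ∑ i, ‖v i‖ :=
  (pi_norm_le_iff_of_nonneg (Finset.sum_nonneg fun _ _ => norm_nonneg _)).mpr fun i =>
    Finset.single_le_sum (f := fun j => ‖v j‖) (fun _ _ => norm_nonneg _) (Finset.mem_univ i)

theorem stmt12_general (lam mu : ℝ) (hlam : 0 < lam)
    (ℓ : ℕ) (f : ℝ → Fin ℓ → ℝ)
    (hbound : ∀ x : ℝ, |x| ≤ lam → (∑ i, |f x i|) ≤ mu)
    (hadd : ∀ x y : ℝ, |x| + |y| ≤ lam → f (x + y) = f x + f y) :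
    ∃ r : Fin ℓ → ℝ, (∑ i, |r i|) ≤ mu / lam ∧
      ∀ x : ℝ, |x| ≤ lam → ∀ i, f x i = r i * x := by
  have hnorm : ∀ x, |x| ≤ lam → ‖f x‖ ≤ mu := fun x hx =>
    (pi_norm_le_sum_norm (f x)).trans (by simpa only [Real.norm_eq_abs] using hbound x hx)
  refine ⟨fun i => f lam i / lam, ?_, fun x hx i => ?_⟩
  · simp_rw [abs_div, abs_of_pos hlam, ← Finset.sum_div]
    exact div_le_div_of_nonneg_right (hbound lam (abs_of_pos hlam).le) hlam.le
  · rw [IsAdditiveGerm.eq_div_smul hadd hlam hnorm hx, Pi.smul_apply, smul_eq_mul]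
    ring

/-- an additive germ `f` on `[−λ, λ]` with values in the ℓ¹-ball
of radius `μ` in `ℝ^ℓ` is given by multiplication by a vector of ℓ¹-norm at
most `μ/λ`. -/
theorem stmt12 (lam mu : ℝ) (hlam : 0 < lam) (hmu : 0 < mu)
    (ℓ : ℕ) (hℓ : 1 ≤ ℓ) (f : ℝ → Fin ℓ → ℝ)
    (hbound : ∀ x : ℝ, |x| ≤ lam → (∑ i, |f x i|) ≤ mu)
    (hadd : ∀ x y : ℝ, |x| + |y| ≤ lam → f (x + y) = f x + f y) :
    ∃ r : Fin ℓ → ℝ, (∑ i, |r i|) ≤ mu / lam ∧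
      ∀ x : ℝ, |x| ≤ lam → ∀ i, f x i = r i * x :=
  stmt12_general lam mu hlam ℓ f hbound hadd
end

section
/- Let A and A' be additive abelian groups, p : A' → A a surjective group homomorphism, d a translation-invariant metric on A, λ, μ > 0 real numbers, and χ' : A' → ℝ/ℤ a group homomorphism such that for every finite family x'_1, …, x'_m ∈ A' one has: Σ_{i=1}^m d(p(x'_i), 0) ≤ λ implies Σ_{i=1}^m d'(χ'(x'_i), 0) ≤ μ, where d' is the quotient metric on ℝ/ℤ of total length 1. Then χ' vanishes on the kernel of p, and consequently there exists a group homomorphism χ : A → ℝ/ℤ such that χ' = χ ∘ p. -/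
/-- let `p : A' → A` be a surjective homomorphism of abelian
groups, `d` a translation-invariant metric on `A`, and `χ' : A' → ℝ/ℤ` a
homomorphism such that every finite family with `∑ d(p(x'ᵢ),0) ≤ λ` satisfies
`∑ d'(χ'(x'ᵢ),0) ≤ μ`.  Then `χ'` vanishes on `ker p` and factors as
`χ' = χ ∘ p` for some homomorphism `χ : A → ℝ/ℤ`. -/
theorem stmt14 {A' A : Type*} [AddCommGroup A'] [AddCommGroup A] [MetricSpace A]
    (hinv : ∀ x y z : A, dist (x + z) (y + z) = dist x y)
    (p : A' →+ A) (hp : Function.Surjective p)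
    (lam mu : ℝ) (hlam : 0 < lam) (hmu : 0 < mu)
    (χ' : A' →+ AddCircle (1 : ℝ))
    (h : ∀ (m : ℕ) (x : Fin m → A'), (∑ i, dist (p (x i)) 0) ≤ lam →
      (∑ i, dist (χ' (x i)) 0) ≤ mu) :
    (∀ x' : A', p x' = 0 → χ' x' = 0) ∧
    ∃ χ : A →+ AddCircle (1 : ℝ), ∀ x' : A', χ' x' = χ (p x') := by
  have hker : ∀ x' : A', p x' = 0 → χ' x' = 0 := by
    intro x' hx'
    have key : ∀ m : ℕ, (m : ℝ) * dist (χ' x') 0 ≤ mu := by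
      intro m
      have := h m (fun _ => x') ?_
      · simpa using this
      · simp [hx', hlam.le]
    have hd : dist (χ' x') 0 = 0 := by
      by_contra hne
      have hpos : 0 < dist (χ' x') 0 := lt_of_le_of_ne dist_nonneg (Ne.symm hne)
      obtain ⟨m, hm⟩ := exists_nat_gt (mu / dist (χ' x') 0)
      have := key m
      have : (m : ℝ) ≤ mu / dist (χ' x') 0 := (le_div_iff₀ hpos).mpr this
      linarith
    exact dist_eq_zero.mp hd
  refine ⟨hker, ?_⟩
  set f := Function.surjInv hp
  have hf : Function.RightInverse f p := Function.rightInverse_surjInv hp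
  refine ⟨p.liftOfRightInverse f hf ⟨χ', hker⟩, fun x' => ?_⟩
  exact (p.liftOfRightInverse_comp_apply f hf ⟨χ', hker⟩ x').symm
end

section
/- Let λ > 0 be a real number, k ∈ ℕ, and n_1, …, n_k ∈ ℤ. Then the following are equivalent: (a) for every finite family x_1, …, x_m ∈ ℝ/ℤ with Σ_{i=1}^m d(x_i, 0) ≤ λ one has Σ_{i=1}^m Σ_{j=1}^k d(n_j · x_i, 0) ≤ 1/4; (b) Σ_{j=1}^k |n_j| ≤ 1/(4λ). Here n_j · x_i denotes the ℤ-scalar multiple in the group ℝ/ℤ. -/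
/-- for `λ > 0` and integers `n₁, …, n_k`, the tolerance
condition — every finite family `x₁, …, x_m ∈ ℝ/ℤ` with `∑ d(xᵢ,0) ≤ λ`
satisfies `∑_{i,j} d(n_j·xᵢ, 0) ≤ 1/4` — is equivalent to `∑_j |n_j| ≤ 1/(4λ)`. -/
theorem stmt15 (lam : ℝ) (hlam : 0 < lam) (k : ℕ) (n : Fin k → ℤ) :
    (∀ (m : ℕ) (x : Fin m → AddCircle (1 : ℝ)),
      (∑ i, dist (x i) 0) ≤ lam →
      (∑ i, ∑ j, dist ((n j) • x i) 0) ≤ 1 / 4) ↔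
    ((∑ j, |n j| : ℤ) : ℝ) ≤ 1 / (4 * lam) := by
  set N : ℤ := ∑ j, |n j| with hNdef
  have hN0 : (0 : ℤ) ≤ N := Finset.sum_nonneg fun j _ => abs_nonneg _
  constructor
  · intro h
    rcases eq_or_lt_of_le hN0 with h0 | hpos
    · rw [← h0]; push_cast; positivity
    · have hN1 : (1 : ℝ) ≤ (N : ℝ) := by exact_mod_cast hpos
      set m : ℕ := ⌈2 * (N : ℝ) * lam⌉₊ with hm
      have hmpos : 0 < m := Nat.ceil_pos.2 (by positivity)
      have hmposR : (0 : ℝ) < m := by exact_mod_cast hmpos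
      have hmR : 2 * (N : ℝ) * lam ≤ m := Nat.le_ceil _
      set t : ℝ := lam / m with ht
      have htpos : 0 < t := div_pos hlam hmposR
      have hNt : (N : ℝ) * t ≤ 1 / 2 := by
        rw [ht, mul_div_assoc', div_le_div_iff₀ hmposR two_pos]
        linarith
      have hkey : ∀ c : ℤ, |c| ≤ N → ‖(((c : ℝ) * t : ℝ) : AddCircle (1 : ℝ))‖ = |(c : ℝ)| * t := by
        intro c hc
        have hcR : |(c : ℝ)| ≤ (N : ℝ) := by exact_mod_cast hc
        have hle : |(c : ℝ) * t| ≤ |(1 : ℝ)| / 2 := by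
          rw [abs_one, abs_mul, abs_of_pos htpos]
          exact le_trans (mul_le_mul_of_nonneg_right hcR htpos.le) hNt
        rw [(AddCircle.norm_coe_eq_abs_iff (1 : ℝ) one_ne_zero).2 hle, abs_mul,
          abs_of_pos htpos]
      have hx : (∑ _i : Fin m, dist (((t : ℝ) : AddCircle (1 : ℝ))) 0) ≤ lam := by
        have h1 : ‖((t : ℝ) : AddCircle (1 : ℝ))‖ = t := by
          have := hkey 1 hpos
          simpa using this
        simp only [dist_zero_right, h1, Finset.sum_const, Finset.card_univ,
          Fintype.card_fin, nsmul_eq_mul]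
        rw [ht, mul_div_cancel₀ _ (ne_of_gt hmposR)]
      have h2 := h m (fun _ => ((t : ℝ) : AddCircle (1 : ℝ))) hx
      have h3 : (∑ _i : Fin m, ∑ j, dist ((n j) • ((t : ℝ) : AddCircle (1 : ℝ))) 0)
          = (N : ℝ) * lam := by
        have hterm : ∀ j, dist ((n j) • ((t : ℝ) : AddCircle (1 : ℝ))) 0
            = |((n j : ℝ))| * t := by
          intro j
          have habs : |n j| ≤ N :=
            Finset.single_le_sum (fun j _ => abs_nonneg (n j)) (Finset.mem_univ j)
          rw [dist_zero_right, ← AddCircle.coe_zsmul, zsmul_eq_mul]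
          exact hkey (n j) habs
        simp only [hterm, ← Finset.sum_mul, Finset.sum_const, Finset.card_univ,
          Fintype.card_fin, nsmul_eq_mul]
        have : (∑ j, |((n j : ℝ))|) = (N : ℝ) := by
          rw [hNdef]; push_cast; ring
        rw [this, ht]
        field_simp
      rw [h3] at h2
      rw [le_div_iff₀ (by positivity)]
      linarith
  · intro h m x hx
    have hstep : ∀ i, ∑ j, dist ((n j) • x i) 0 ≤ (N : ℝ) * dist (x i) 0 := by
      intro i
      have : ∀ j, dist ((n j) • x i) 0 ≤ |((n j : ℝ))| * dist (x i) 0 := by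
        intro j
        rw [dist_zero_right, dist_zero_right]
        simpa [Int.norm_eq_abs] using norm_zsmul_le (n j) (x i)
      calc ∑ j, dist ((n j) • x i) 0 ≤ ∑ j, |((n j : ℝ))| * dist (x i) 0 :=
            Finset.sum_le_sum fun j _ => this j
        _ = (N : ℝ) * dist (x i) 0 := by
            rw [← Finset.sum_mul, hNdef]; push_cast; ring
    calc (∑ i, ∑ j, dist ((n j) • x i) 0) ≤ ∑ i, (N : ℝ) * dist (x i) 0 :=
          Finset.sum_le_sum fun i _ => hstep i
      _ = (N : ℝ) * ∑ i, dist (x i) 0 := by rw [Finset.mul_sum]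
      _ ≤ (N : ℝ) * lam := by
          apply mul_le_mul_of_nonneg_left hx (by exact_mod_cast hN0)
      _ ≤ (1 / (4 * lam)) * lam := mul_le_mul_of_nonneg_right h hlam.le
      _ = 1 / 4 := by field_simp
end
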